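/- Consider the DMMF process and let R, U, V ⊆ {1,...,n} be pairwise disjoint sets with R and U nonempty (V may be empty). Define f[t] = Σ_{j∈R} W_j[t] / Σ_{j∈R} α_j − Σ_{j∈U} W_j[t] / Σ_{j∈U} α_j. Then for every round t, on the event that W_j[t]/α_j > W_i[t]/α_i for all j ∈ V and all i ∈ R, one has E[f[t+1] − f[t] | F_t] ≥ (1 − ∏_{k∈R}(1−p_k)) / (Σ_{j∈R} α_j) · ∏_{k∉R∪V}(1−p_k) − (1 − ∏_{k∈U}(1−p_k)) / (Σ_{j∈U} α_j). -/

import Mathlib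

open MeasureTheory ProbabilityTheory Filter

/-- Winner predicate: given fair shares `α`, previous win counts `Wprev`, and the requests `r`
in the current round, agent `i` wins iff it requests and beats (in normalized win count,
ties broken by smallest index) every other requesting agent. -/
def winsAt {n : ℕ} (α : Fin n → ℝ) (Wprev : Fin n → ℕ) (r : Fin n → Bool) (i : Fin n) : Prop :=
  r i = true ∧ ∀ j : Fin n, r j = true →
    ((Wprev i : ℝ) / α i < (Wprev j : ℝ) / α j ∨
      ((Wprev i : ℝ) / α i = (Wprev j : ℝ) / α j ∧ i ≤ j))

open Classical in
/-- `W α r t i` : number of rounds, among the first `t` rounds, won by agent `i` under the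
DMMF allocation rule, when the (sample-path) requests are given by `r` (`r t i = true` means
agent `i` requests in round `t+1`). -/
noncomputable def W {n : ℕ} (α : Fin n → ℝ) (r : ℕ → Fin n → Bool) : ℕ → Fin n → ℕ
  | 0, _ => 0
  | t + 1, i => W α r t i + (if winsAt α (W α r t) (r t) i then 1 else 0)

/-- The subgroup stability criterion for the set `S`. -/
def StabCrit {n : ℕ} (α p : Fin n → ℝ) (S : Finset (Fin n)) : Prop :=
  ∀ R ⊆ S, R.Nonempty →
    (1 - ∏ k ∈ S, (1 - p k)) / (∑ k ∈ S, α k) ≤ (1 - ∏ k ∈ R, (1 - p k)) / (∑ k ∈ R, α k)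

/-- The strict subgroup stability criterion for the set `S`. -/
def StabCritStrict {n : ℕ} (α p : Fin n → ℝ) (S : Finset (Fin n)) : Prop :=
  StabCrit α p S ∧ ∀ R ⊂ S, R.Nonempty →
    (1 - ∏ k ∈ S, (1 - p k)) / (∑ k ∈ S, α k) < (1 - ∏ k ∈ R, (1 - p k)) / (∑ k ∈ R, α k)

/-- The hypotheses of the DMMF process: the requests `req t i` (request of agent `i` in
round `t+1`) are independent across agents and rounds, with `req t i` Bernoulli of
parameter `p i`; the fair shares `α i` are positive and sum to `1`. -/
structure IsDMMF {Ω : Type*} [MeasurableSpace Ω] (μ : Measure Ω) {n : ℕ}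
    (α p : Fin n → ℝ) (req : ℕ → Fin n → Ω → Bool) : Prop where
  isProb : IsProbabilityMeasure μ
  α_pos : ∀ i, 0 < α i
  α_sum : ∑ i, α i = 1
  p_mem : ∀ i, p i ∈ Set.Icc (0 : ℝ) 1
  meas : ∀ t i, Measurable (req t i)
  indep : iIndepFun
    (fun ti : ℕ × Fin n => req ti.1 ti.2) μ
  law : ∀ t i, μ {ω | req t i ω = true} = ENNReal.ofReal (p i)

/-- The natural filtration of the DMMF process: `natFilt req t` is the σ-algebra generated
by the requests of rounds `1, …, t` (i.e. by `req s` for `s < t`). -/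
def natFilt {Ω : Type*} [MeasurableSpace Ω] {n : ℕ}
    (req : ℕ → Fin n → Ω → Bool) (t : ℕ) : MeasurableSpace Ω :=
  ⨆ (s : ℕ) (_ : s < t) (i : Fin n),
    MeasurableSpace.comap (fun ω => req s i ω) (⊤ : MeasurableSpace Bool)

/-! At most one agent wins a round, so `f[t+1] - f[t]` is `1/Σ_R α` if the winner lies in `R`,
minus `1/Σ_U α` if it lies in `U`. On the event of the statement the agents of `V` lose against
every agent of `R`, so the winner lies in `R` as soon as some agent of `R` requests and every
agent outside `R ∪ V` stays silent; and the winner lies in `U` only if some agent of `U` requests.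
This lower bound on the increment depends on the requests of round `t + 1` alone, which are
independent of `F_t`, while the event is `F_t`-measurable. Hence on the event the conditional
expectation of the increment is at least the plain expectation of the bound, and independence
across agents evaluates the two probabilities as products. -/

theorem ite_one_zero_mono {M : Type*} [Zero M] [One M] [Preorder M] [ZeroLEOneClass M]
    {P Q : Prop} [Decidable P] [Decidable Q] (h : P → Q) :
    (if P then (1 : M) else 0) ≤ if Q then 1 else 0 := by
  split_ifs <;> simp_all

theorem MeasureTheory.ae_integral_le_condExp_of_forall_mem_le {Ω : Type*}
    {m m₁ m₀ : MeasurableSpace Ω} {μ : Measure[m₀] Ω} (hm : m ≤ m₀) [SigmaFinite (μ.trim hm)]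
    (hm₁ : m₁ ≤ m₀) (hindep : Indep m₁ m μ) {A : Set Ω} (hA : MeasurableSet[m] A)
    {c g : Ω → ℝ} (hc : StronglyMeasurable[m₁] c) (hc_int : Integrable c μ)
    (hg_int : Integrable g μ) (hcg : ∀ ω ∈ A, c ω ≤ g ω) :
    ∀ᵐ ω ∂μ, ω ∈ A → ∫ x, c x ∂μ ≤ μ[g|m] ω := by
  have hmono : μ[A.indicator c|m] ≤ᵐ[μ] μ[A.indicator g|m] :=
    condExp_mono (hc_int.indicator (hm _ hA)) (hg_int.indicator (hm _ hA))
      (Eventually.of_forall fun ω => Set.indicator_le_indicator' (hcg ω))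
  filter_upwards [hmono, condExp_indicator hc_int hA, condExp_indicator hg_int hA,
    condExp_indep_eq hm₁ hm hc hindep] with ω hle hc_ind hg_ind hc_const hω
  calc ∫ x, c x ∂μ = μ[A.indicator c|m] ω := by
        rw [hc_ind, Set.indicator_of_mem hω, hc_const]
    _ ≤ μ[A.indicator g|m] ω := hle
    _ = μ[g|m] ω := by rw [hg_ind, Set.indicator_of_mem hω]

theorem MeasureTheory.integral_ite_one_zero {Ω : Type*} [MeasurableSpace Ω] {μ : Measure Ω}
    {P : Ω → Prop} [DecidablePred P] (hP : MeasurableSet {ω | P ω}) :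
    ∫ ω, (if P ω then (1 : ℝ) else 0) ∂μ = μ.real {ω | P ω} := by
  rw [← integral_indicator_one hP]
  simp only [Set.indicator_apply, Set.mem_ofPred_eq, Pi.one_apply]

theorem MeasureTheory.integrable_ite_one_zero {Ω : Type*} [MeasurableSpace Ω] {μ : Measure Ω}
    [IsFiniteMeasure μ] {P : Ω → Prop} [DecidablePred P] (hP : MeasurableSet {ω | P ω}) :
    Integrable (fun ω => if P ω then (1 : ℝ) else 0) μ := by
  have hind : (fun ω => if P ω then (1 : ℝ) else 0) = {ω | P ω}.indicator 1 := by
    ext ω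
    simp [Set.indicator_apply]
  exact hind ▸ (integrable_const 1).indicator hP

section DMMF

variable {n : ℕ}

section Allocation

variable (α : Fin n → ℝ) (y : Fin n → ℕ) (z : Fin n → Bool)

theorem winsAt_unique {i j : Fin n} (hi : winsAt α y z i) (hj : winsAt α y z j) : i = j := by
  rcases hi.2 j hj.1 with hij | hij <;> rcases hj.2 i hi.1 with hji | hji
  · exact absurd hij hji.not_gt
  · exact absurd hij hji.1.not_gt
  · exact absurd hji hij.1.not_gt
  · exact le_antisymm hij.2 hji.2

theorem exists_winsAt (hz : ∃ k, z k = true) : ∃ j, winsAt α y z j := by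
  obtain ⟨j, hj, hmin⟩ := Finset.exists_min_image (Finset.univ.filter fun k => z k = true)
    (fun k => toLex ((y k : ℝ) / α k, k)) (by simpa [Finset.filter_nonempty_iff] using hz)
  refine ⟨j, (Finset.mem_filter.mp hj).2, fun k hk => ?_⟩
  exact Prod.Lex.toLex_le_toLex.mp (hmin k (by simpa using hk))

theorem exists_mem_winsAt {R V : Finset (Fin n)}
    (hVR : ∀ j ∈ V, ∀ i ∈ R, (y i : ℝ) / α i < (y j : ℝ) / α j)
    (hR : ∃ k ∈ R, z k = true) (hout : ∀ k ∈ Finset.univ \ (R ∪ V), z k = false) :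
    ∃ j ∈ R, winsAt α y z j := by
  obtain ⟨k, hkR, hk⟩ := hR
  obtain ⟨j, hj⟩ := exists_winsAt α y z ⟨k, hk⟩
  refine ⟨j, ?_, hj⟩
  by_contra hjR
  by_cases hjV : j ∈ V
  · have hjk := hVR j hjV k hkR
    rcases hj.2 k hk with hlt | heq
    · exact hlt.not_gt hjk
    · exact hjk.ne' heq.1
  · exact Bool.false_ne_true ((hout j (by simp [hjR, hjV])).symm.trans hj.1)

open Classical in
theorem sum_ite_winsAt (S : Finset (Fin n)) :
    (∑ j ∈ S, if winsAt α y z j then (1 : ℝ) else 0)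
      = if ∃ j ∈ S, winsAt α y z j then 1 else 0 := by
  rw [Finset.sum_boole]
  split_ifs with h
  · obtain ⟨j, hjS, hj⟩ := h
    have : S.filter (winsAt α y z) = {j} :=
      Finset.eq_singleton_iff_unique_mem.mpr ⟨Finset.mem_filter.mpr ⟨hjS, hj⟩,
        fun i hi => winsAt_unique α y z (Finset.mem_filter.mp hi).2 hj⟩
    simp [this]
  · simpa [Finset.filter_eq_empty_iff] using h

end Allocation

theorem W_le (α : Fin n → ℝ) (r : ℕ → Fin n → Bool) (t : ℕ) (j : Fin n) : W α r t j ≤ t := by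
  induction t with
  | zero => simp [W]
  | succ t ih => simp only [W]; split_ifs <;> omega

open Classical in
theorem sum_W_succ_sub_sum_W (α : Fin n → ℝ) (r : ℕ → Fin n → Bool) (t : ℕ) (S : Finset (Fin n)) :
    ∑ j ∈ S, (W α r (t + 1) j : ℝ) - ∑ j ∈ S, (W α r t j : ℝ)
      = if ∃ j ∈ S, winsAt α (W α r t) (r t) j then 1 else 0 := by
  rw [← sum_ite_winsAt, ← Finset.sum_sub_distrib]
  refine Finset.sum_congr rfl fun j _ => ?_
  simp only [W]
  split_ifs <;> simp

/-- The paper's `f[t]` along the request path `r`. -/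
noncomputable def winGap (α : Fin n → ℝ) (R U : Finset (Fin n)) (r : ℕ → Fin n → Bool)
    (t : ℕ) : ℝ :=
  (∑ j ∈ R, (W α r t j : ℝ)) / (∑ j ∈ R, α j) - (∑ j ∈ U, (W α r t j : ℝ)) / (∑ j ∈ U, α j)

open Classical in
noncomputable def winGapIncrementBound (α : Fin n → ℝ) (R U V : Finset (Fin n))
    (z : Fin n → Bool) : ℝ :=
  (if (∃ k ∈ R, z k = true) ∧ ∀ k ∈ Finset.univ \ (R ∪ V), z k = false then 1 else 0)
      / (∑ j ∈ R, α j)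
    - (if ∃ k ∈ U, z k = true then 1 else 0) / (∑ j ∈ U, α j)

open Classical in
theorem winGapIncrementBound_le_winGap_succ_sub {α : Fin n → ℝ} {R U V : Finset (Fin n)}
    (hα : ∀ i, 0 ≤ α i) (r : ℕ → Fin n → Bool) (t : ℕ)
    (hVR : ∀ j ∈ V, ∀ i ∈ R, (W α r t i : ℝ) / α i < (W α r t j : ℝ) / α j) :
    winGapIncrementBound α R U V (r t) ≤ winGap α R U r (t + 1) - winGap α R U r t := by
  have hR : 0 ≤ ∑ j ∈ R, α j := Finset.sum_nonneg fun i _ => hα i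
  have hU : 0 ≤ ∑ j ∈ U, α j := Finset.sum_nonneg fun i _ => hα i
  rw [winGap, winGap, sub_sub_sub_comm, ← sub_div, ← sub_div, sum_W_succ_sub_sum_W,
    sum_W_succ_sub_sum_W, winGapIncrementBound]
  gcongr
  · exact ite_one_zero_mono fun hE => exists_mem_winsAt α _ _ hVR hE.1 hE.2
  · exact ite_one_zero_mono fun ⟨j, hjU, hj⟩ => ⟨j, hjU, hj.1⟩

section Requests

variable {Ω : Type*} {req : ℕ → Fin n → Ω → Bool}

theorem measurable_req_round (t : ℕ) :
    Measurable[⨆ i : Fin n, MeasurableSpace.comap (fun ω => req t i ω) ⊤]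
      (fun ω k => req t k ω) :=
  @measurable_pi_lambda _ _ _ (⨆ i : Fin n, MeasurableSpace.comap (fun ω => req t i ω) ⊤) _ _
    fun i => Measurable.of_comap_le
    (le_iSup (fun i => MeasurableSpace.comap (fun ω => req t i ω) ⊤) i)

variable [MeasurableSpace Ω] {μ : Measure Ω} {α p : Fin n → ℝ} {R U V : Finset (Fin n)}

theorem comap_le_natFilt {s t : ℕ} (hst : s < t) (i : Fin n) :
    MeasurableSpace.comap (fun ω => req s i ω) ⊤ ≤ natFilt req t :=
  le_iSup₂_of_le s hst (le_iSup (fun i => MeasurableSpace.comap (fun ω => req s i ω) ⊤) i)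

theorem natFilt_mono : Monotone (natFilt req) := fun _ _ htt' =>
  iSup₂_le fun _ hs => iSup_le fun i => comap_le_natFilt (hs.trans_le htt') i

theorem natFilt_le (hmeas : ∀ t i, Measurable (req t i)) (t : ℕ) :
    natFilt req t ≤ ‹MeasurableSpace Ω› :=
  iSup₂_le fun s _ => iSup_le fun i => (hmeas s i).comap_le

theorem iSup_comap_req_le (hmeas : ∀ t i, Measurable (req t i)) (t : ℕ) :
    ⨆ i : Fin n, MeasurableSpace.comap (fun ω => req t i ω) ⊤ ≤ ‹MeasurableSpace Ω› :=
  iSup_le fun i => (hmeas t i).comap_le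

theorem indep_iSup_comap_req_natFilt (h : IsDMMF μ α p req) (t : ℕ) :
    Indep (⨆ i : Fin n, MeasurableSpace.comap (fun ω => req t i ω) ⊤) (natFilt req t) μ := by
  let m : ℕ × Fin n → MeasurableSpace Ω := fun si => MeasurableSpace.comap (req si.1 si.2) ⊤
  have hdisj : Disjoint {si : ℕ × Fin n | si.1 = t} {si | si.1 < t} :=
    Set.disjoint_left.mpr fun si (hs : si.1 = t) (ht : si.1 < t) => ht.ne hs
  refine indep_of_indep_of_le_left (indep_of_indep_of_le_right
    (indep_iSup_of_disjoint (m := m) (fun si => (h.meas si.1 si.2).comap_le) h.indep.iIndep hdisj)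
    ?_) ?_
  · exact iSup₂_le fun s hs => iSup_le fun i =>
      le_iSup₂ (f := fun si (_ : si.1 < t) => m si) (s, i) hs
  · exact iSup_le fun i => le_iSup₂ (f := fun si (_ : si.1 = t) => m si) (t, i) rfl

open Classical in
theorem measurable_W (t : ℕ) :
    Measurable[natFilt req t] (fun ω => W α (fun s k => req s k ω) t) := by
  induction t with
  | zero => exact measurable_const
  | succ t ih =>
    exact (measurable_of_countable fun yz : (Fin n → ℕ) × (Fin n → Bool) =>
        fun i => yz.1 i + if winsAt α yz.1 yz.2 i then 1 else 0).comp
      ((ih.mono (natFilt_mono t.le_succ) le_rfl).prodMk ((measurable_req_round t).mono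
        (iSup_le fun i => comap_le_natFilt t.lt_succ_self i) le_rfl))

theorem measurableSet_req_round (hmeas : ∀ t i, Measurable (req t i)) (t : ℕ)
    (P : (Fin n → Bool) → Prop) : MeasurableSet {ω | P fun k => req t k ω} :=
  measurable_pi_lambda _ (hmeas t) .of_discrete

theorem measureReal_req_false (h : IsDMMF μ α p req) (t : ℕ) (k : Fin n) :
    μ.real {ω | req t k ω = false} = 1 - p k := by
  have := h.isProb
  have hcompl : {ω | req t k ω = false} = {ω | req t k ω = true}ᶜ := by ext; simp
  rw [hcompl, probReal_compl_eq_one_sub (measurableSet_req_round h.meas t fun z => z k = true),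
    measureReal_def, h.law, ENNReal.toReal_ofReal (h.p_mem k).1]

theorem measureReal_forall_req_false (h : IsDMMF μ α p req) (t : ℕ) (S : Finset (Fin n)) :
    μ.real {ω | ∀ k ∈ S, req t k ω = false} = ∏ k ∈ S, (1 - p k) := by
  have hindep : iIndepFun (fun k => req t k) μ :=
    h.indep.precomp (g := fun k : Fin n => (t, k)) fun _ _ hk => (Prod.ext_iff.mp hk).2
  have hset : {ω | ∀ k ∈ S, req t k ω = false} = ⋂ k ∈ S, req t k ⁻¹' {false} := by ext; simp
  rw [hset, measureReal_def, hindep.measure_inter_preimage_eq_mul S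
    (sets := fun _ => {false}) fun _ _ => measurableSet_singleton false, ENNReal.toReal_prod]
  exact Finset.prod_congr rfl fun k _ => measureReal_req_false h t k

theorem measureReal_exists_req_true (h : IsDMMF μ α p req) (t : ℕ) (S : Finset (Fin n)) :
    μ.real {ω | ∃ k ∈ S, req t k ω = true} = 1 - ∏ k ∈ S, (1 - p k) := by
  have := h.isProb
  have hcompl : {ω | ∃ k ∈ S, req t k ω = true} = {ω | ∀ k ∈ S, req t k ω = false}ᶜ := by
    ext; simp
  rw [hcompl, probReal_compl_eq_one_sub
    (measurableSet_req_round h.meas t fun z => ∀ k ∈ S, z k = false),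
    measureReal_forall_req_false h t]

theorem measureReal_exists_req_true_and_forall_req_false (h : IsDMMF μ α p req) (t : ℕ)
    {S O : Finset (Fin n)} (hSO : Disjoint S O) :
    μ.real {ω | (∃ k ∈ S, req t k ω = true) ∧ ∀ k ∈ O, req t k ω = false}
      = (1 - ∏ k ∈ S, (1 - p k)) * ∏ k ∈ O, (1 - p k) := by
  have := h.isProb
  have hdiff : {ω | (∃ k ∈ S, req t k ω = true) ∧ ∀ k ∈ O, req t k ω = false}
      = {ω | ∀ k ∈ O, req t k ω = false} \ {ω | ∀ k ∈ S ∪ O, req t k ω = false} := by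
    ext ω
    simp only [Set.mem_ofPred_eq, Set.mem_sdiff, Finset.mem_union]
    grind
  have hsub : {ω | ∀ k ∈ S ∪ O, req t k ω = false} ⊆ {ω | ∀ k ∈ O, req t k ω = false} :=
    fun ω hω k hk => hω k (Finset.mem_union_right S hk)
  rw [hdiff, measureReal_sdiff hsub
    (measurableSet_req_round h.meas t fun z => ∀ k ∈ S ∪ O, z k = false),
    measureReal_forall_req_false h t,
    measureReal_forall_req_false h t, Finset.prod_union hSO]
  ring

theorem integrable_comp_req_round (h : IsDMMF μ α p req) (t : ℕ) (φ : (Fin n → Bool) → ℝ) :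
    Integrable (fun ω => φ fun k => req t k ω) μ :=
  have := h.isProb
  Integrable.of_finite.comp_measurable (measurable_pi_lambda _ (h.meas t))

theorem integrable_W_apply (h : IsDMMF μ α p req) (t : ℕ) (j : Fin n) :
    Integrable (fun ω => (W α (fun s k => req s k ω) t j : ℝ)) μ :=
  have := h.isProb
  Integrable.of_bound
    ((measurable_of_countable fun y : Fin n → ℕ => (y j : ℝ)).comp
      ((measurable_W t).mono (natFilt_le h.meas t) le_rfl)).aestronglyMeasurable
    t (ae_of_all _ fun ω => by simpa using W_le α _ t j)

theorem integrable_winGap (h : IsDMMF μ α p req) (t : ℕ) :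
    Integrable (fun ω => winGap α R U (fun s k => req s k ω) t) μ :=
  ((integrable_finsetSum R fun j _ => integrable_W_apply h t j).div_const _).sub
    ((integrable_finsetSum U fun j _ => integrable_W_apply h t j).div_const _)

theorem integral_winGapIncrementBound (h : IsDMMF μ α p req) (t : ℕ) :
    ∫ ω, winGapIncrementBound α R U V (fun k => req t k ω) ∂μ
      = (1 - ∏ k ∈ R, (1 - p k)) / (∑ j ∈ R, α j) * ∏ k ∈ Finset.univ \ (R ∪ V), (1 - p k)
        - (1 - ∏ k ∈ U, (1 - p k)) / (∑ j ∈ U, α j) := by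
  have := h.isProb
  have hER : MeasurableSet
      {ω | (∃ k ∈ R, req t k ω = true) ∧ ∀ k ∈ Finset.univ \ (R ∪ V), req t k ω = false} :=
    measurableSet_req_round h.meas t fun z =>
      (∃ k ∈ R, z k = true) ∧ ∀ k ∈ Finset.univ \ (R ∪ V), z k = false
  have hEU : MeasurableSet {ω | ∃ k ∈ U, req t k ω = true} :=
    measurableSet_req_round h.meas t fun z => ∃ k ∈ U, z k = true
  have hdisj : Disjoint R (Finset.univ \ (R ∪ V)) :=
    Finset.disjoint_sdiff.mono_left Finset.subset_union_left
  simp only [winGapIncrementBound]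
  rw [integral_sub ((integrable_ite_one_zero hER).div_const _)
      ((integrable_ite_one_zero hEU).div_const _),
    integral_div, integral_div, integral_ite_one_zero hER, integral_ite_one_zero hEU,
    measureReal_exists_req_true_and_forall_req_false h t hdisj, measureReal_exists_req_true h t]
  ring

end Requests

end DMMF

theorem dmmf_drift_of_win_difference_general
    {Ω : Type*} [MeasurableSpace Ω] (μ : Measure Ω) {n : ℕ}
    (α p : Fin n → ℝ) (req : ℕ → Fin n → Ω → Bool) (h : IsDMMF μ α p req)
    (R U V : Finset (Fin n)) (t : ℕ) :
    ∀ᵐ ω ∂μ,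
      (∀ j ∈ V, ∀ i ∈ R,
        (W α (fun s k => req s k ω) t i : ℝ) / α i
          < (W α (fun s k => req s k ω) t j : ℝ) / α j) →
      (1 - ∏ k ∈ R, (1 - p k)) / (∑ j ∈ R, α j) * ∏ k ∈ Finset.univ \ (R ∪ V), (1 - p k)
        - (1 - ∏ k ∈ U, (1 - p k)) / (∑ j ∈ U, α j)
      ≤ (μ[(fun ω' =>
            ((∑ j ∈ R, (W α (fun s k => req s k ω') (t + 1) j : ℝ)) / (∑ j ∈ R, α j)
              - (∑ j ∈ U, (W α (fun s k => req s k ω') (t + 1) j : ℝ)) / (∑ j ∈ U, α j))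
            - ((∑ j ∈ R, (W α (fun s k => req s k ω') t j : ℝ)) / (∑ j ∈ R, α j)
              - (∑ j ∈ U, (W α (fun s k => req s k ω') t j : ℝ)) / (∑ j ∈ U, α j)))
          | natFilt req t]) ω := by
  have := h.isProb
  have hbound := ae_integral_le_condExp_of_forall_mem_le (natFilt_le h.meas t)
    (iSup_comap_req_le h.meas t) (indep_iSup_comap_req_natFilt h t)
    (measurable_W t (MeasurableSet.of_discrete
      (s := {y | ∀ j ∈ V, ∀ i ∈ R, (y i : ℝ) / α i < (y j : ℝ) / α j})))
    (c := fun ω => winGapIncrementBound α R U V fun k => req t k ω)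
    ((measurable_of_countable (winGapIncrementBound α R U V)).comp
      (measurable_req_round t)).stronglyMeasurable
    (integrable_comp_req_round h t _) ((integrable_winGap h (t + 1)).sub (integrable_winGap h t))
    fun ω hω => winGapIncrementBound_le_winGap_succ_sub (fun i => (h.α_pos i).le) _ t hω
  rwa [integral_winGapIncrementBound h] at hbound

/-- Drift of the difference in normalized win counts. For pairwise disjoint
sets `R, U, V` with `R, U` nonempty, let
`f t = Σ_{j∈R} W j t/Σ_{j∈R} α j − Σ_{j∈U} W j t/Σ_{j∈U} α j`. Then for every round `t`, on
the event that `W j t/α j > W i t/α i` for all `j ∈ V`, `i ∈ R`, one has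
`E[f (t+1) − f t | F_t] ≥ (1 − ∏_{k∈R}(1−p k))/Σ_{j∈R} α j · ∏_{k∉R∪V}(1−p k)
  − (1 − ∏_{k∈U}(1−p k))/Σ_{j∈U} α j`. -/
theorem dmmf_drift_of_win_difference
    {Ω : Type*} [MeasurableSpace Ω] (μ : Measure Ω) {n : ℕ}
    (α p : Fin n → ℝ) (req : ℕ → Fin n → Ω → Bool) (h : IsDMMF μ α p req)
    (R U V : Finset (Fin n)) (hR : R.Nonempty) (hU : U.Nonempty)
    (hRU : Disjoint R U) (hRV : Disjoint R V) (hUV : Disjoint U V) (t : ℕ) :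
    ∀ᵐ ω ∂μ,
      (∀ j ∈ V, ∀ i ∈ R,
        (W α (fun s k => req s k ω) t i : ℝ) / α i
          < (W α (fun s k => req s k ω) t j : ℝ) / α j) →
      (1 - ∏ k ∈ R, (1 - p k)) / (∑ j ∈ R, α j) * ∏ k ∈ Finset.univ \ (R ∪ V), (1 - p k)
        - (1 - ∏ k ∈ U, (1 - p k)) / (∑ j ∈ U, α j)
      ≤ (μ[(fun ω' =>
            ((∑ j ∈ R, (W α (fun s k => req s k ω') (t + 1) j : ℝ)) / (∑ j ∈ R, α j)
              - (∑ j ∈ U, (W α (fun s k => req s k ω') (t + 1) j : ℝ)) / (∑ j ∈ U, α j))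
            - ((∑ j ∈ R, (W α (fun s k => req s k ω') t j : ℝ)) / (∑ j ∈ R, α j)
              - (∑ j ∈ U, (W α (fun s k => req s k ω') t j : ℝ)) / (∑ j ∈ U, α j)))
          | natFilt req t]) ω :=
  dmmf_drift_of_win_difference_general μ α p req h R U V t
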